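/- arXiv:1810.02971 — 3 statements merged into one kernel-verified Lean document; each statement's English description precedes it below -/
import Mathlib

section
/- (Hermite substencil reconstruction) Let $u:\mathbb{R}\to\mathbb{R}$ be $C^3$, with cell averages $\bar u_i = \frac{1}{h}\int_{I_i} u\,dx$ and average derivatives $\Delta u_i = \frac{1}{h}\int_{I_i} u'(x)\,dx = \frac{u(x_{i+1/2}) - u(x_{i-1/2})}{h}$ on uniform cells $I_i$. Then $\frac{1}{6}\bar u_{j} + \frac{5}{6}\bar u_{j+1} - \frac{h}{3}\Delta u_{j+1} = u(x_{j+1/2}) + O(h^3)$ as $h\to 0$. -/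
/-!
The scheme reproduces quadratics exactly and sends `(x - x₀) ^ 3` to `-h ^ 3 / 6`, so the cubic
Taylor polynomial of `u` at `x₀` contributes a multiple of `h ^ 3`. The Taylor remainder is
`O((x - x₀) ^ 3)`, so its integrals over the two cells next to `x₀` are `O(h ^ 4)` and its
increment over a cell is `O(h ^ 3)`; after the division by `h` every term is `O(h ^ 3)`.
-/

open Filter Asymptotics intervalIntegral Topology
open scoped Interval

/-- The paper's interface `x_{j+1/2}` is `x₀`, with cells `I_j = [x₀ - h, x₀]` and
`I_{j+1} = [x₀, x₀ + h]`. At `h = 0`, where `1 / h = 0`, the value is `-u x₀`, so the error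
estimate can only hold on a punctured neighbourhood of `0`. -/
noncomputable def hermiteError (u : ℝ → ℝ) (x₀ h : ℝ) : ℝ :=
  1 / 6 * ((1 / h) * ∫ x in (x₀ - h)..x₀, u x) + 5 / 6 * ((1 / h) * ∫ x in x₀..(x₀ + h), u x)
    - h / 3 * ((u (x₀ + h) - u x₀) / h) - u x₀

theorem hermiteError_add {u v : ℝ → ℝ} (hu : Continuous u) (hv : Continuous v) (x₀ h : ℝ) :
    hermiteError (u + v) x₀ h = hermiteError u x₀ h + hermiteError v x₀ h := by
  simp only [hermiteError, Pi.add_apply,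
    integral_add (hu.intervalIntegrable _ _) (hv.intervalIntegrable _ _)]
  ring

theorem integral_cubic (a b c d A B : ℝ) :
    ∫ t in A..B, (a + b * t + c * t ^ 2 + d * t ^ 3) = a * (B - A) + b * (B ^ 2 - A ^ 2) / 2
      + c * (B ^ 3 - A ^ 3) / 3 + d * (B ^ 4 - A ^ 4) / 4 := by
  have hF (t : ℝ) : HasDerivAt (fun t => a * t + b * t ^ 2 / 2 + c * t ^ 3 / 3 + d * t ^ 4 / 4)
      (a + b * t + c * t ^ 2 + d * t ^ 3) t := by
    refine (((((hasDerivAt_id' t).const_mul a).add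
      (((hasDerivAt_pow 2 t).const_mul b).div_const 2)).add
      (((hasDerivAt_pow 3 t).const_mul c).div_const 3)).add
      (((hasDerivAt_pow 4 t).const_mul d).div_const 4)).congr_deriv ?_
    norm_num
    ring
  rw [integral_eq_sub_of_hasDerivAt (fun t _ => hF t)
    ((by fun_prop : Continuous _).intervalIntegrable _ _)]
  ring

theorem hermiteError_cubic (a b c d x₀ : ℝ) {h : ℝ} (hh : h ≠ 0) :
    hermiteError (fun x => a + b * (x - x₀) + c * (x - x₀) ^ 2 + d * (x - x₀) ^ 3) x₀ h
      = -(d / 6) * h ^ 3 := by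
  simp only [hermiteError]
  rw [integral_comp_sub_right (fun t => a + b * t + c * t ^ 2 + d * t ^ 3),
    integral_comp_sub_right (fun t => a + b * t + c * t ^ 2 + d * t ^ 3),
    integral_cubic, integral_cubic]
  field_simp
  ring

theorem isBigO_intervalIntegral_pow {E : Type*} [NormedAddCommGroup E] [NormedSpace ℝ E]
    {f : ℝ → E} {x₀ : ℝ} {n : ℕ}
    (hf : f =O[𝓝 x₀] fun x => (x - x₀) ^ n) :
    (fun h => ∫ x in x₀..x₀ + h, f x) =O[𝓝 0] fun h => h ^ (n + 1) := by
  obtain ⟨C, hC0, hC⟩ := hf.exists_nonneg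
  obtain ⟨ε, hε, hball⟩ := Metric.eventually_nhds_iff.mp hC.bound
  refine IsBigO.of_bound C ?_
  filter_upwards [Metric.ball_mem_nhds 0 hε] with h hh
  have hbound : ∀ x ∈ Ι x₀ (x₀ + h), ‖f x‖ ≤ C * |h| ^ n := by
    intro x hx
    have hx' : |x - x₀| ≤ |h| := by
      simpa using Set.abs_sub_left_of_mem_uIcc (Set.uIoc_subset_uIcc hx)
    calc ‖f x‖ ≤ C * ‖(x - x₀) ^ n‖ := hball (lt_of_le_of_lt hx' (by simpa using hh))
      _ ≤ C * |h| ^ n := by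
        rw [norm_pow, Real.norm_eq_abs]
        gcongr
  calc ‖∫ x in x₀..x₀ + h, f x‖ ≤ C * |h| ^ n * |x₀ + h - x₀| :=
        norm_integral_le_of_norm_le_const hbound
    _ = C * ‖h ^ (n + 1)‖ := by simp [pow_succ]; ring

theorem isBigO_one_div_mul_of_isBigO_pow_succ {l : Filter ℝ} {g : ℝ → ℝ} {n : ℕ}
    (hg : g =O[l] fun h => h ^ (n + 1)) : (fun h => 1 / h * g h) =O[l] fun h => h ^ n := by
  refine ((isBigO_refl (fun h : ℝ => 1 / h) l).mul hg).trans (isBigO_of_le _ fun h => ?_)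
  rcases eq_or_ne h 0 with rfl | hh
  · simp
  · rw [one_div, pow_succ', inv_mul_cancel_left₀ hh]

theorem isBigO_hermiteError_of_isBigO_pow_three {f : ℝ → ℝ} {x₀ : ℝ}
    (hf : f =O[𝓝 x₀] fun x => (x - x₀) ^ 3) :
    (fun h => hermiteError f x₀ h) =O[𝓝 0] fun h => h ^ 3 := by
  have hf₀ : f x₀ = 0 := hf.eq_zero_imp.self_of_nhds (by simp)
  have hright : (fun h => ∫ x in x₀..x₀ + h, f x) =O[𝓝 0] fun h => h ^ 4 :=
    isBigO_intervalIntegral_pow hf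
  have hleft : (fun h => ∫ x in (x₀ - h)..x₀, f x) =O[𝓝 0] fun h => h ^ 4 := by
    refine (hright.comp_tendsto (continuous_neg.tendsto' 0 0 neg_zero)).neg_left.congr
      (fun h => ?_) (fun h => ?_)
    · simp [sub_eq_add_neg, integral_symm (x₀ + -h) x₀]
    · simp [Even.neg_pow (by decide : Even 4)]
  have hpoint : (fun h => h / 3 * f (x₀ + h)) =O[𝓝 0] fun h => h ^ 4 := by
    have hshift : (fun h => f (x₀ + h)) =O[𝓝 0] fun h => h ^ 3 := by
      have hx₀ : Tendsto (fun h => x₀ + h) (𝓝 0) (𝓝 x₀) :=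
        (continuous_const_add x₀).tendsto' 0 x₀ (add_zero x₀)
      exact (hf.comp_tendsto hx₀).congr_right fun h => by simp
    exact ((isBigO_refl (fun h : ℝ => h) _).const_mul_left (1 / 3)).mul hshift |>.congr
      (fun h => by ring) (fun h => by ring)
  refine (isBigO_one_div_mul_of_isBigO_pow_succ
    (((hleft.const_mul_left (1 / 6)).add (hright.const_mul_left (5 / 6))).sub hpoint)).congr_left
    fun h => ?_
  simp only [hermiteError, hf₀]
  ring

theorem taylorWithinEval_three_univ (u : ℝ → ℝ) (x₀ x : ℝ) :
    taylorWithinEval u 3 Set.univ x₀ x = u x₀ + deriv u x₀ * (x - x₀)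
      + iteratedDeriv 2 u x₀ / 2 * (x - x₀) ^ 2 + iteratedDeriv 3 u x₀ / 6 * (x - x₀) ^ 3 := by
  simp only [taylorWithinEval_succ, taylor_within_apply, zero_add, Finset.range_one,
    iteratedDerivWithin_univ, smul_eq_mul, Finset.sum_singleton, Nat.factorial, Nat.cast_one,
    inv_one, pow_zero, mul_one, iteratedDeriv_zero, one_mul, CharP.cast_eq_zero, pow_one,
    iteratedDeriv_one, Nat.succ_eq_add_one, Nat.reduceAdd, Nat.cast_ofNat, mul_inv_rev]
  ring

theorem isBigO_hermiteError {u : ℝ → ℝ} (hu : ContDiff ℝ 3 u) (x₀ : ℝ) :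
    (fun h => hermiteError u x₀ h) =O[𝓝[≠] 0] fun h => h ^ 3 := by
  set T : ℝ → ℝ := fun x => u x₀ + deriv u x₀ * (x - x₀)
      + iteratedDeriv 2 u x₀ / 2 * (x - x₀) ^ 2 + iteratedDeriv 3 u x₀ / 6 * (x - x₀) ^ 3
  have hR : (u - T) =O[𝓝 x₀] fun x => (x - x₀) ^ 3 :=
    (taylor_isLittleO_univ hu).isBigO.congr_left fun x => by rw [taylorWithinEval_three_univ]; rfl
  have hT : (fun h => hermiteError T x₀ h) =O[𝓝[≠] 0] fun h => h ^ 3 := by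
    refine (isBigO_const_mul_self (-(iteratedDeriv 3 u x₀ / 6 / 6)) _ _).congr' ?_ .rfl
    filter_upwards [self_mem_nhdsWithin] with h hh
    exact (hermiteError_cubic _ _ _ _ x₀ hh).symm
  have hTc : Continuous T := by fun_prop
  have hsplit (h : ℝ) : hermiteError u x₀ h = hermiteError T x₀ h + hermiteError (u - T) x₀ h := by
    rw [← hermiteError_add hTc (hu.continuous.sub hTc), add_sub_cancel]
  exact (hT.add ((isBigO_hermiteError_of_isBigO_pow_three hR).mono nhdsWithin_le_nhds)).congr_left
    fun h => (hsplit h).symm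

/-- Hermite substencil reconstruction:
`1/6 ū_j + 5/6 ū_{j+1} - (h/3) Δu_{j+1} = u(x_{j+1/2}) + O(h³)`. -/
theorem stmt14 (u : ℝ → ℝ) (hu : ContDiff ℝ 3 u) (x0 : ℝ) :
    (fun h : ℝ =>
        1 / 6 * ((1 / h) * ∫ x in (x0 - h)..x0, u x)
          + 5 / 6 * ((1 / h) * ∫ x in x0..(x0 + h), u x)
          - h / 3 * ((u (x0 + h) - u x0) / h)
          - u x0)
      =O[nhdsWithin 0 (Set.Ioi 0)] (fun h : ℝ => h ^ 3) :=
  (isBigO_hermiteError hu x0).mono (nhdsWithin_mono _ fun _ hh => ne_of_gt hh)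
end

section
/- (Large Hermite stencil, fifth order) Let $u$ be $C^5$ with cell averages $\bar u_i$ and average derivatives $\Delta u_i$ on uniform cells of width $h$. Then $\frac{1}{120}\big(-23\bar u_{j-1} + 76\bar u_{j} + 67\bar u_{j+1} - 9h\Delta u_{j-1} - 21h\Delta u_{j+1}\big) = u(x_{j+1/2}) + O(h^5)$ as $h\to 0$. -/
/-!
With `U x = ∫ t in x0..x, u t`, the cell averages are difference quotients of `U` and
`h Δu_i` are differences of `u = U'`, so the stencil error is a linear functional of the pair
`(U, u)`. Expanding `U` to order 6 and `u` to order 5 at `x0`, the Taylor polynomials are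
reproduced exactly up to the degree-5 term, which leaves `-u⁽⁵⁾(x0) h⁵ / 240`, while the
remainders, `o(h⁶)` for `U` (divided by `h`) and `o(h⁵)` for `u`, contribute `o(h⁵)`.
-/

open Filter Asymptotics Set Topology Nat

section

variable {E : Type*} [NormedAddCommGroup E] [NormedSpace ℝ E]

theorem isLittleO_taylor_remainder_comp_mul {f : ℝ → E} {n : ℕ} (hf : ContDiff ℝ n f)
    (x₀ c : ℝ) :
    (fun h : ℝ => f (x₀ + c * h) - taylorWithinEval f n univ x₀ (x₀ + c * h))
      =o[𝓝 0] fun h => h ^ n := by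
  have hlin : Tendsto (fun h : ℝ => x₀ + c * h) (𝓝 0) (𝓝 x₀) := by
    simpa using ((continuous_const_mul c).const_add x₀).tendsto 0
  refine ((taylor_isLittleO_univ hf).comp_tendsto hlin).trans_isBigO ?_
  refine IsBigO.of_bound (|c| ^ n) (Eventually.of_forall fun h => ?_)
  simp [mul_pow]

theorem contDiff_integral_succ [CompleteSpace E] {u : ℝ → E} {n : ℕ} (hu : ContDiff ℝ n u)
    (a : ℝ) :
    ContDiff ℝ (n + 1 : ℕ) fun x => ∫ t in a..x, u t := by
  have hcont := hu.continuous
  push_cast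
  refine contDiff_succ_iff_deriv.mpr ⟨intervalIntegral.differentiable_integral_of_continuous hcont,
    by simp, ?_⟩
  rwa [funext (hcont.deriv_integral u a)]

end

theorem taylorWithinEval_univ_eq_sum (f : ℝ → ℝ) (n : ℕ) (x₀ x : ℝ) :
    taylorWithinEval f n univ x₀ x =
      ∑ k ∈ Finset.range (n + 1), iteratedDeriv k f x₀ / k ! * (x - x₀) ^ k := by
  simp only [taylor_within_apply, iteratedDerivWithin_univ, smul_eq_mul]
  exact Finset.sum_congr rfl fun k _ => by ring

theorem taylorWithinEval_succ_univ_eq_sum_deriv (f : ℝ → ℝ) (n : ℕ) (x₀ x : ℝ) :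
    taylorWithinEval f (n + 1) univ x₀ x = f x₀ +
      ∑ k ∈ Finset.range (n + 1),
        iteratedDeriv k (deriv f) x₀ / (k + 1)! * (x - x₀) ^ (k + 1) := by
  rw [taylorWithinEval_univ_eq_sum, Finset.sum_range_succ', add_comm]
  simp [iteratedDeriv_succ']

/-- `U` stands for a primitive of `u`, so that `(U b - U a) / h` is the average of `u` over a cell
`[a, b]` of width `h`. -/
noncomputable def hermiteStencilError (U u : ℝ → ℝ) (x₀ h : ℝ) : ℝ :=
  1 / 120 * (-23 * ((U (x₀ - h) - U (x₀ - 2 * h)) / h) + 76 * ((U x₀ - U (x₀ - h)) / h)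
    + 67 * ((U (x₀ + h) - U x₀) / h) - 9 * (u (x₀ - h) - u (x₀ - 2 * h))
    - 21 * (u (x₀ + h) - u x₀)) - u x₀

theorem hermiteStencilError_sub (U V u v : ℝ → ℝ) (x₀ h : ℝ) :
    hermiteStencilError (U - V) (u - v) x₀ h =
      hermiteStencilError U u x₀ h - hermiteStencilError V v x₀ h := by
  simp only [hermiteStencilError, Pi.sub_apply]
  ring

theorem hermiteStencilError_polynomial (d : ℕ → ℝ) (C x₀ : ℝ) {h : ℝ} (hh : h ≠ 0) :
    hermiteStencilError
      (fun x => C + ∑ k ∈ Finset.range 6, d k / (k + 1)! * (x - x₀) ^ (k + 1))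
      (fun x => ∑ k ∈ Finset.range 6, d k / k ! * (x - x₀) ^ k) x₀ h = -d 5 / 240 * h ^ 5 := by
  simp only [hermiteStencilError, Finset.sum_range_succ, Finset.sum_range_zero, Nat.factorial]
  push_cast
  field_simp
  ring

theorem hermiteStencilError_isLittleO {R r : ℝ → ℝ} {x₀ : ℝ} {n : ℕ}
    (hR : ∀ c, (fun h : ℝ => R (x₀ + c * h)) =o[𝓝[≠] 0] fun h => h ^ (n + 1))
    (hr : ∀ c, (fun h : ℝ => r (x₀ + c * h)) =o[𝓝[≠] 0] fun h => h ^ n) :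
    (fun h => hermiteStencilError R r x₀ h) =o[𝓝[≠] 0] fun h => h ^ n := by
  have hR' : ∀ c, (fun h : ℝ => R (x₀ + c * h) / h) =o[𝓝[≠] 0] fun h => h ^ n := by
    intro c
    refine ((hR c).mul_isBigO (isBigO_refl (fun h : ℝ => h⁻¹) _)).congr'
      (.of_forall fun h => (div_eq_mul_inv _ _).symm) ?_
    filter_upwards [self_mem_nhdsWithin] with h (hh : h ≠ 0)
    field_simp
    ring
  have hsum := ((((((hR' (-1)).sub (hR' (-2))).const_mul_left (-23)).add
    (((hR' 0).sub (hR' (-1))).const_mul_left 76)).add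
    (((hR' 1).sub (hR' 0)).const_mul_left 67)).sub
    (((hr (-1)).sub (hr (-2))).const_mul_left 9)).sub
    (((hr 1).sub (hr 0)).const_mul_left 21)
  refine (hsum.const_mul_left (1 / 120)).sub (hr 0) |>.congr_left fun h => ?_
  simp only [hermiteStencilError, zero_mul, add_zero, one_mul, neg_mul, ← sub_eq_add_neg]
  ring

/-- Large Hermite stencil: the combination
`(1/120)(-23 ū_{j-1} + 76 ū_j + 67 ū_{j+1} - 9h Δu_{j-1} - 21h Δu_{j+1})`
recovers `u(x_{j+1/2})` to fifth order. -/
theorem stmt15 (u : ℝ → ℝ) (hu : ContDiff ℝ 5 u) (x0 : ℝ) :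
    (fun h : ℝ =>
        1 / 120 *
            (-23 * ((1 / h) * ∫ x in (x0 - 2 * h)..(x0 - h), u x)
              + 76 * ((1 / h) * ∫ x in (x0 - h)..x0, u x)
              + 67 * ((1 / h) * ∫ x in x0..(x0 + h), u x)
              - 9 * h * ((u (x0 - h) - u (x0 - 2 * h)) / h)
              - 21 * h * ((u (x0 + h) - u x0) / h))
          - u x0)
      =O[nhdsWithin 0 (Set.Ioi 0)] (fun h : ℝ => h ^ 5) := by
  set U : ℝ → ℝ := fun x => ∫ t in x0..x, u t
  have hcont : Continuous u := hu.continuous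
  have hderiv : deriv U = u := funext (hcont.deriv_integral u x0)
  have hcells : ∀ a b, ∫ x in a..b, u x = U b - U a := fun a b =>
    (intervalIntegral.integral_interval_sub_left (hcont.intervalIntegrable _ _)
      (hcont.intervalIntegrable _ _)).symm
  set TU : ℝ → ℝ := fun x => taylorWithinEval U 6 univ x0 x
  set Tu : ℝ → ℝ := fun x => taylorWithinEval u 5 univ x0 x
  have hpoly : ∀ h ≠ 0,
      hermiteStencilError TU Tu x0 h = -iteratedDeriv 5 u x0 / 240 * h ^ 5 := by
    intro h hh
    simp only [TU, Tu, taylorWithinEval_succ_univ_eq_sum_deriv U 5,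
      taylorWithinEval_univ_eq_sum u 5, hderiv]
    exact hermiteStencilError_polynomial _ _ _ hh
  have hrem : (fun h => hermiteStencilError (U - TU) (u - Tu) x0 h) =o[𝓝[≠] 0] fun h => h ^ 5 :=
    hermiteStencilError_isLittleO
      (fun c => (isLittleO_taylor_remainder_comp_mul (contDiff_integral_succ hu x0) x0 c).mono
        nhdsWithin_le_nhds)
      (fun c => (isLittleO_taylor_remainder_comp_mul hu x0 c).mono nhdsWithin_le_nhds)
  have hstencil : (fun h => hermiteStencilError U u x0 h) =O[𝓝[≠] 0] fun h => h ^ 5 := by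
    refine (hrem.isBigO.add (isBigO_const_mul_self (-iteratedDeriv 5 u x0 / 240) _ _)).congr'
      ?_ .rfl
    filter_upwards [self_mem_nhdsWithin] with h (hh : h ≠ 0)
    rw [← hpoly h hh, hermiteStencilError_sub, sub_add_cancel]
  refine (hstencil.mono (nhdsWithin_mono _ fun h (hh : 0 < h) => hh.ne')).congr' ?_ .rfl
  filter_upwards [self_mem_nhdsWithin] with h (hh : 0 < h)
  simp only [hermiteStencilError, hcells]
  field_simp
end

section
/- (Inflow ghost values from boundary data) Let $p(x) = \alpha_3 x^3 + \alpha_2 x^2 + \alpha_1 x + \alpha_0$ be a cubic, with cell averages $\bar u_i = \frac{1}{h}\int_{(ih, (i+1)h)} p\,dx$ for $i=-2,-1,0,1$. Then the system expressing $\bar u_{-1}$ and $\bar u_{-2}$ in terms of the boundary values $g := p(0)$, $g' := p'(0)$ and the interior averages $\bar u_0, \bar u_1$ has the exact solution $\bar u_{-1} = \frac{1}{4}(-6g + 6h g' + 11\bar u_0 - \bar u_1)$ and $\bar u_{-2} = \frac{1}{4}(-90g + 42hg' + 105\bar u_0 - 11\bar u_1)$, where in this polynomial setting $g' = p'(0)$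 plays the role of $-f'(g)^{-1}g'(t)$ in the inverse Lax–Wendroff procedure. -/
/-- Inflow ghost values from boundary data: for a cubic `p`, the ghost-cell
averages `ū_{-1}, ū_{-2}` are determined exactly by `p(0)`, `p'(0)` and the
interior averages `ū_0, ū_1`, where `p'(0)` plays the role of
`-f'(g)⁻¹ g'(t)` in the inverse Lax-Wendroff procedure. -/
theorem stmt19 (α3 α2 α1 α0 h : ℝ) (hh : 0 < h) :
    (1 / h) * (∫ x in (-h)..(0 : ℝ), α3 * x ^ 3 + α2 * x ^ 2 + α1 * x + α0)
        = 1 / 4 *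
            (-6 * (α3 * (0 : ℝ) ^ 3 + α2 * (0 : ℝ) ^ 2 + α1 * 0 + α0)
              + 6 * h * (-(deriv (fun x : ℝ => α3 * x ^ 3 + α2 * x ^ 2 + α1 * x + α0) 0))
              + 11 * ((1 / h) * ∫ x in (0 : ℝ)..h, α3 * x ^ 3 + α2 * x ^ 2 + α1 * x + α0)
              - (1 / h) * ∫ x in h..(2 * h), α3 * x ^ 3 + α2 * x ^ 2 + α1 * x + α0) ∧
    (1 / h) * (∫ x in (-(2 * h))..(-h), α3 * x ^ 3 + α2 * x ^ 2 + α1 * x + α0)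
        = 1 / 4 *
            (-90 * (α3 * (0 : ℝ) ^ 3 + α2 * (0 : ℝ) ^ 2 + α1 * 0 + α0)
              + 42 * h * (-(deriv (fun x : ℝ => α3 * x ^ 3 + α2 * x ^ 2 + α1 * x + α0) 0))
              + 105 * ((1 / h) * ∫ x in (0 : ℝ)..h, α3 * x ^ 3 + α2 * x ^ 2 + α1 * x + α0)
              - 11 * ((1 / h) * ∫ x in h..(2 * h), α3 * x ^ 3 + α2 * x ^ 2 + α1 * x + α0)) := by
  have hd : ∀ x : ℝ, HasDerivAt (fun x : ℝ => α3 * x ^ 4 / 4 + α2 * x ^ 3 / 3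
      + α1 * x ^ 2 / 2 + α0 * x) (α3 * x ^ 3 + α2 * x ^ 2 + α1 * x + α0) x := by
    intro x
    have : HasDerivAt (fun x : ℝ => α3 * x ^ 4 / 4 + α2 * x ^ 3 / 3
        + α1 * x ^ 2 / 2 + α0 * x)
        (α3 * (4 * x ^ 3) / 4 + α2 * (3 * x ^ 2) / 3 + α1 * (2 * x ^ 1) / 2 + α0 * 1) x := by
      exact ((((hasDerivAt_pow 4 x).const_mul α3).div_const 4).add
        (((hasDerivAt_pow 3 x).const_mul α2).div_const 3)).add
        (((hasDerivAt_pow 2 x).const_mul α1).div_const 2) |>.add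
        ((hasDerivAt_id x).const_mul α0)
    convert this using 1
    ring
  have key : ∀ a b : ℝ, (∫ x in a..b, α3 * x ^ 3 + α2 * x ^ 2 + α1 * x + α0)
      = (α3 * b ^ 4 / 4 + α2 * b ^ 3 / 3 + α1 * b ^ 2 / 2 + α0 * b)
        - (α3 * a ^ 4 / 4 + α2 * a ^ 3 / 3 + α1 * a ^ 2 / 2 + α0 * a) := by
    intro a b
    exact intervalIntegral.integral_eq_sub_of_hasDerivAt (fun x _ => hd x)
      (by apply Continuous.intervalIntegrable; continuity)
  have hderiv : deriv (fun x : ℝ => α3 * x ^ 3 + α2 * x ^ 2 + α1 * x + α0) 0 = α1 := by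
    have : HasDerivAt (fun x : ℝ => α3 * x ^ 3 + α2 * x ^ 2 + α1 * x + α0)
        (α3 * (3 * (0:ℝ) ^ 2) + α2 * (2 * (0:ℝ) ^ 1) + α1 * 1) 0 := by
      have := ((((hasDerivAt_pow 3 (0:ℝ)).const_mul α3).add
        ((hasDerivAt_pow 2 (0:ℝ)).const_mul α2)).add ((hasDerivAt_id (0:ℝ)).const_mul α1)
        ).add_const α0
      simpa using this
    simpa using this.deriv
  rw [key, key, key, key, hderiv]
  have hne : h ≠ 0 := ne_of_gt hh
  constructor <;> field_simp <;> ring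
end
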